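/- If lim_{n→∞} a_n = 0, then the Cantor set K has Hausdorff dimension at least 1 and its one-dimensional Hausdorff measure is not σ-finite. -/

import Mathlib

open MeasureTheory Filter Set Topology
open scoped ENNReal

noncomputable section

/-- Side length of generation-`n` squares: `s n = λ₁ ⋯ λₙ` (here `Λ k` is `λ_{k+1}`). -/
def sideLen (Λ : ℕ → ℝ) (n : ℕ) : ℝ := ∏ k ∈ Finset.range n, Λ k

/-- Lower-left corner of the generation-`n` square encoded by the word `w`. -/
def cornerPt (Λ : ℕ → ℝ) (w : ℕ → Bool × Bool) (n : ℕ) : ℂ :=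
  ∑ k ∈ Finset.range n,
    (((if (w k).1 then sideLen Λ k - sideLen Λ (k + 1) else 0 : ℝ) : ℂ) +
      ((if (w k).2 then sideLen Λ k - sideLen Λ (k + 1) else 0 : ℝ) : ℂ) * Complex.I)

/-- The (closed) generation-`n` square encoded by the word `w`. -/
def cSquare (Λ : ℕ → ℝ) (w : ℕ → Bool × Bool) (n : ℕ) : Set ℂ :=
  {z : ℂ | (cornerPt Λ w n).re ≤ z.re ∧ z.re ≤ (cornerPt Λ w n).re + sideLen Λ n ∧
    (cornerPt Λ w n).im ≤ z.im ∧ z.im ≤ (cornerPt Λ w n).im + sideLen Λ n}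

/-- The family `𝒟_n` of generation-`n` squares. -/
def genSq (Λ : ℕ → ℝ) (n : ℕ) : Set (Set ℂ) := {Q | ∃ w, Q = cSquare Λ w n}

/-- The planar Cantor set `K = ⋂ₙ ⋃ⱼ Qⱼⁿ`. -/
def cantorK (Λ : ℕ → ℝ) : Set ℂ := ⋂ n, ⋃ w : ℕ → Bool × Bool, cSquare Λ w n

/-- The linear density `a_n = 4^{-n}/s_n` at generation `n`. -/
def linDensity (Λ : ℕ → ℝ) (n : ℕ) : ℝ := 1 / (4 ^ n * sideLen Λ n)

/-!
Let `ν` be the image of the uniform product measure on words `ℕ → Bool × Bool` under the coding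
map, which sends a word to the point of `K` lying in all the squares it encodes. Squares of
generation `n` coding different words are at distance at least `(1 - 2λ) sₙ`, so a set of
diameter `D ∈ [(1 - 2λ) s_{m+1}, (1 - 2λ) sₘ)` meets `K` inside a single generation-`m` square
and has `ν`-measure at most `4⁻ᵐ = aₘ sₘ ≤ 4 aₘ D / (1 - 2λ)`. Since `aₘ → 0`, `ν ≤ ε μH¹`
for every `ε > 0`, so every set of positive `ν`-measure, `K` in particular, has infinite
`μH¹`-measure.
-/

open Finset Metric

section MassDistribution

variable {X : Type*} [EMetricSpace X] [MeasurableSpace X] [BorelSpace X]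

theorem le_smul_hausdorffMeasure {ν : Measure X} {d : ℝ} {c δ : ℝ≥0∞} (hc0 : c ≠ 0)
    (hc : c ≠ ∞) (hδ : 0 < δ) (h : ∀ s, ediam s ≤ δ → ν s ≤ c * ediam s ^ d) :
    ν ≤ c • μH[d] := by
  have key : c⁻¹ • ν ≤ μH[d] := Measure.le_hausdorffMeasure d _ δ hδ fun s hs => by
    rw [Measure.smul_apply, smul_eq_mul, ENNReal.inv_mul_le_iff hc0 hc]
    exact h s hs
  intro s
  calc ν s = c * (c⁻¹ • ν) s := by
        rw [Measure.smul_apply, smul_eq_mul, ← mul_assoc, ENNReal.mul_inv_cancel hc0 hc, one_mul]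
    _ ≤ (c • μH[d]) s := mul_le_mul_right (key s) c

theorem hausdorffMeasure_eq_top_of_forall_le_mul_ediam {ν : Measure X} {d : ℝ}
    (h : ∀ ε : ℝ, 0 < ε → ∃ δ > 0, ∀ s, ediam s ≤ δ → ν s ≤ ENNReal.ofReal ε * ediam s ^ d)
    {A : Set X} (hA : ν A ≠ 0) : μH[d] A = ∞ := by
  by_contra hfin
  have hbound : ∀ ε : ℝ, 0 < ε → ν A ≤ ENNReal.ofReal ε * μH[d] A := fun ε hε => by
    obtain ⟨δ, hδ, hs⟩ := h ε hε
    exact le_smul_hausdorffMeasure (by simpa using hε) ENNReal.ofReal_ne_top hδ hs A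
  have hlim : Tendsto (fun ε => ENNReal.ofReal ε * μH[d] A) (𝓝[>] 0) (𝓝 0) := by
    simpa using ENNReal.Tendsto.mul_const (ENNReal.tendsto_ofReal
      (tendsto_nhdsWithin_of_tendsto_nhds (tendsto_id (x := 𝓝 (0 : ℝ))))) (Or.inr hfin)
  exact hA (nonpos_iff_eq_zero.1 (ge_of_tendsto hlim (eventually_nhdsWithin_of_forall hbound)))

end MassDistribution

theorem not_sigmaFinite_restrict_of_measure_eq_top {α : Type*} [MeasurableSpace α]
    {μ ν : Measure α} {K : Set α} (h : ∀ A, ν A ≠ 0 → μ A = ∞) (hK : ν K ≠ 0) :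
    ¬ SigmaFinite (μ.restrict K) := by
  intro _
  refine hK (measure_mono_null (?_ : K ⊆ ⋃ n, spanningSets (μ.restrict K) n ∩ K)
    (measure_iUnion_null fun n => ?_))
  · rw [← iUnion_inter, iUnion_spanningSets, univ_inter]
  · by_contra hn
    refine (measure_spanningSets_lt_top (μ.restrict K) n).ne ?_
    rw [Measure.restrict_apply (measurableSet_spanningSets _ n)]
    exact h _ hn

theorem exists_succ_le_lt_of_tendsto_zero {f : ℕ → ℝ} (hf : Tendsto f atTop (𝓝 0)) {x : ℝ}
    (hx : 0 < x) {N : ℕ} (hN : x < f N) : ∃ m, N ≤ m ∧ f (m + 1) ≤ x ∧ x < f m := by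
  classical
  have hex : ∃ j, f (N + j) ≤ x := by
    obtain ⟨M, hM⟩ := (hf.eventually (gt_mem_nhds hx)).exists_forall_of_atTop
    exact ⟨M, (hM (N + M) (by omega)).le⟩
  obtain ⟨j, hj⟩ : ∃ j, Nat.find hex = j + 1 := Nat.exists_eq_add_one.2 <|
    Nat.pos_of_ne_zero fun h0 => hN.not_ge (by simpa [h0] using Nat.find_spec hex)
  refine ⟨N + j, by omega, by simpa [hj, add_assoc] using Nat.find_spec hex, ?_⟩
  exact not_le.1 (Nat.find_min hex (by omega))

theorem sideLen_succ (Λ : ℕ → ℝ) (n : ℕ) : sideLen Λ (n + 1) = sideLen Λ n * Λ n :=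
  prod_range_succ Λ n

section SideLength

variable {Λ : ℕ → ℝ}

theorem sideLen_nonneg (h0 : ∀ n, 0 ≤ Λ n) (n : ℕ) : 0 ≤ sideLen Λ n :=
  prod_nonneg fun k _ => h0 k

theorem sideLen_pos (h0 : ∀ n, 0 < Λ n) (n : ℕ) : 0 < sideLen Λ n :=
  prod_pos fun k _ => h0 k

theorem sideLen_succ_le_mul (h0 : ∀ n, 0 ≤ Λ n) {c : ℝ} (hc : ∀ n, Λ n ≤ c) (n : ℕ) :
    sideLen Λ (n + 1) ≤ c * sideLen Λ n := by
  rw [sideLen_succ, mul_comm]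
  exact mul_le_mul_of_nonneg_right (hc n) (sideLen_nonneg h0 n)

theorem sideLen_antitone (h0 : ∀ n, 0 ≤ Λ n) (h1 : ∀ n, Λ n ≤ 1) : Antitone (sideLen Λ) :=
  antitone_nat_of_succ_le fun n => (sideLen_succ_le_mul h0 h1 n).trans_eq (one_mul _)

theorem tendsto_sideLen_atTop (h0 : ∀ n, 0 ≤ Λ n) {c : ℝ} (hc : ∀ n, Λ n ≤ c) (hc1 : c < 1) :
    Tendsto (sideLen Λ) atTop (𝓝 0) := by
  refine squeeze_zero (sideLen_nonneg h0) (fun n => ?_)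
    (tendsto_pow_atTop_nhds_zero_of_lt_one ((h0 0).trans (hc 0)) hc1)
  calc sideLen Λ n ≤ ∏ _k ∈ range n, c := prod_le_prod (fun k _ => h0 k) fun k _ => hc k
    _ = c ^ n := by simp

end SideLength

def digitOffset (Λ : ℕ → ℝ) (b : ℕ → Bool) (k : ℕ) : ℝ :=
  if b k then sideLen Λ k - sideLen Λ (k + 1) else 0

def codingCoord (Λ : ℕ → ℝ) (b : ℕ → Bool) : ℝ := ∑' k, digitOffset Λ b k

def codingPt (Λ : ℕ → ℝ) (w : ℕ → Bool × Bool) : ℂ :=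
  ⟨codingCoord Λ fun k => (w k).1, codingCoord Λ fun k => (w k).2⟩

theorem cornerPt_re (Λ : ℕ → ℝ) (w : ℕ → Bool × Bool) (n : ℕ) :
    (cornerPt Λ w n).re = ∑ k ∈ range n, digitOffset Λ (fun k => (w k).1) k := by
  simp [cornerPt, digitOffset, Complex.re_sum]

theorem cornerPt_im (Λ : ℕ → ℝ) (w : ℕ → Bool × Bool) (n : ℕ) :
    (cornerPt Λ w n).im = ∑ k ∈ range n, digitOffset Λ (fun k => (w k).2) k := by
  simp [cornerPt, digitOffset, Complex.im_sum]

section Coding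

variable {Λ : ℕ → ℝ} (h0 : ∀ n, 0 ≤ Λ n) (h1 : ∀ n, Λ n ≤ 1)
include h0 h1

theorem digitOffset_mem_Icc (b : ℕ → Bool) (k : ℕ) :
    digitOffset Λ b k ∈ Icc 0 (sideLen Λ k - sideLen Λ (k + 1)) := by
  have hgap : 0 ≤ sideLen Λ k - sideLen Λ (k + 1) :=
    sub_nonneg.2 (sideLen_antitone h0 h1 k.le_succ)
  unfold digitOffset
  split_ifs <;> simp [hgap]

theorem sum_range_digitOffset_add_le (b : ℕ → Bool) (n m : ℕ) :
    ∑ i ∈ range m, digitOffset Λ b (n + i) ≤ sideLen Λ n - sideLen Λ (n + m) :=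
  calc ∑ i ∈ range m, digitOffset Λ b (n + i)
      ≤ ∑ i ∈ range m, (sideLen Λ (n + i) - sideLen Λ (n + (i + 1))) :=
        sum_le_sum fun i _ => (digitOffset_mem_Icc h0 h1 b (n + i)).2
    _ = sideLen Λ n - sideLen Λ (n + m) := sum_range_sub' (fun i => sideLen Λ (n + i)) m

theorem summable_digitOffset (b : ℕ → Bool) : Summable (digitOffset Λ b) :=
  summable_of_sum_range_le (fun k => (digitOffset_mem_Icc h0 h1 b k).1) fun m => by
    simpa using (sum_range_digitOffset_add_le h0 h1 b 0 m).trans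
      (sub_le_self _ (sideLen_nonneg h0 _))

theorem tsum_digitOffset_add_mem_Icc (b : ℕ → Bool) (n : ℕ) :
    ∑' i, digitOffset Λ b (i + n) ∈ Icc 0 (sideLen Λ n) := by
  have hnonneg (i : ℕ) : 0 ≤ digitOffset Λ b (i + n) := (digitOffset_mem_Icc h0 h1 b _).1
  refine ⟨tsum_nonneg hnonneg, Real.tsum_le_of_sum_range_le hnonneg fun m => ?_⟩
  simpa [add_comm] using (sum_range_digitOffset_add_le h0 h1 b n m).trans
    (sub_le_self _ (sideLen_nonneg h0 (n + m)))

theorem codingCoord_mem_Icc (b : ℕ → Bool) (n : ℕ) :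
    codingCoord Λ b ∈ Icc (∑ k ∈ range n, digitOffset Λ b k)
      (∑ k ∈ range n, digitOffset Λ b k + sideLen Λ n) := by
  obtain ⟨htail, htail'⟩ := tsum_digitOffset_add_mem_Icc h0 h1 b n
  rw [codingCoord, ← (summable_digitOffset h0 h1 b).sum_add_tsum_nat_add n]
  constructor <;> linarith

theorem sub_le_codingCoord_sub {b c : ℕ → Bool} {k : ℕ} (hbc : ∀ j < k, b j = c j)
    (hb : b k = true) (hc : c k = false) :
    sideLen Λ k - 2 * sideLen Λ (k + 1) ≤ codingCoord Λ b - codingCoord Λ c := by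
  have hprefix : ∑ j ∈ range k, digitOffset Λ b j = ∑ j ∈ range k, digitOffset Λ c j :=
    sum_congr rfl fun j hj => by simp only [digitOffset, hbc j (mem_range.1 hj)]
  have hbk : digitOffset Λ b k = sideLen Λ k - sideLen Λ (k + 1) := if_pos hb
  have hck : digitOffset Λ c k = 0 := if_neg (by simp [hc])
  have hbI := codingCoord_mem_Icc h0 h1 b (k + 1)
  have hcI := codingCoord_mem_Icc h0 h1 c (k + 1)
  rw [sum_range_succ, hbk, hprefix] at hbI
  rw [sum_range_succ, hck] at hcI
  linarith [hbI.1, hcI.2]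

theorem sub_le_abs_codingCoord_sub {b c : ℕ → Bool} {k : ℕ} (hbc : ∀ j < k, b j = c j)
    (hk : b k ≠ c k) :
    sideLen Λ k - 2 * sideLen Λ (k + 1) ≤ |codingCoord Λ b - codingCoord Λ c| := by
  cases hb : b k
  · have hc : c k = true := by simpa [hb] using hk.symm
    rw [abs_sub_comm]
    exact (sub_le_codingCoord_sub h0 h1 (fun j hj => (hbc j hj).symm) hc hb).trans
      (le_abs_self _)
  · have hc : c k = false := by simpa [hb] using hk.symm
    exact (sub_le_codingCoord_sub h0 h1 hbc hb hc).trans (le_abs_self _)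

theorem measurable_codingCoord : Measurable (codingCoord Λ) := by
  refine measurable_of_tendsto_metrizable (f := fun n b => ∑ k ∈ range n, digitOffset Λ b k)
    (fun n => Finset.measurable_sum _ fun k _ => ?_)
    (tendsto_pi_nhds.2 fun b => (summable_digitOffset h0 h1 b).hasSum.tendsto_sum_nat)
  exact (Measurable.of_discrete (f := fun x : Bool =>
    if x then sideLen Λ k - sideLen Λ (k + 1) else 0)).comp (measurable_pi_apply k)

theorem codingPt_mem_cSquare (w : ℕ → Bool × Bool) (n : ℕ) : codingPt Λ w ∈ cSquare Λ w n := by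
  obtain ⟨hre, hre'⟩ := codingCoord_mem_Icc h0 h1 (fun k => (w k).1) n
  obtain ⟨him, him'⟩ := codingCoord_mem_Icc h0 h1 (fun k => (w k).2) n
  rw [cSquare, mem_ofPred_eq, cornerPt_re, cornerPt_im]
  exact ⟨hre, hre', him, him'⟩

theorem codingPt_mem_cantorK (w : ℕ → Bool × Bool) : codingPt Λ w ∈ cantorK Λ :=
  mem_iInter.2 fun n => mem_iUnion.2 ⟨w, codingPt_mem_cSquare h0 h1 w n⟩

theorem measurable_codingPt : Measurable (codingPt Λ) := by
  have hfst : Measurable fun w : ℕ → Bool × Bool => fun k => (w k).1 :=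
    measurable_pi_lambda _ fun k => measurable_fst.comp (measurable_pi_apply k)
  have hsnd : Measurable fun w : ℕ → Bool × Bool => fun k => (w k).2 :=
    measurable_pi_lambda _ fun k => measurable_snd.comp (measurable_pi_apply k)
  exact Complex.measurableEquivRealProd.symm.measurable.comp
    (((measurable_codingCoord h0 h1).comp hfst).prodMk ((measurable_codingCoord h0 h1).comp hsnd))

theorem sub_le_dist_codingPt {v w : ℕ → Bool × Bool} {k : ℕ} (hvw : ∀ j < k, v j = w j)
    (hk : v k ≠ w k) :
    sideLen Λ k - 2 * sideLen Λ (k + 1) ≤ dist (codingPt Λ v) (codingPt Λ w) := by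
  have hre (z z' : ℂ) : |z.re - z'.re| ≤ dist z z' := by
    rw [Complex.dist_eq, ← Complex.sub_re]; exact Complex.abs_re_le_norm _
  have him (z z' : ℂ) : |z.im - z'.im| ≤ dist z z' := by
    rw [Complex.dist_eq, ← Complex.sub_im]; exact Complex.abs_im_le_norm _
  rcases not_and_or.1 (mt Prod.ext_iff.2 hk) with h | h
  · exact (sub_le_abs_codingCoord_sub h0 h1 (fun j hj => congrArg Prod.fst (hvw j hj)) h).trans
      (hre (codingPt Λ v) (codingPt Λ w))
  · exact (sub_le_abs_codingCoord_sub h0 h1 (fun j hj => congrArg Prod.snd (hvw j hj)) h).trans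
      (him (codingPt Λ v) (codingPt Λ w))

end Coding

theorem eq_of_dist_codingPt_lt {Λ : ℕ → ℝ} (h0 : ∀ n, 0 ≤ Λ n) {c : ℝ} (hc : ∀ n, Λ n ≤ c)
    (hc2 : c ≤ 1 / 2) {v w : ℕ → Bool × Bool} {n : ℕ}
    (h : dist (codingPt Λ v) (codingPt Λ w) < (1 - 2 * c) * sideLen Λ n) :
    ∀ k < n, v k = w k := by
  have h1 (n : ℕ) : Λ n ≤ 1 := (hc n).trans (by linarith)
  intro k₀ hk₀n
  by_contra hk₀
  have hex : ∃ k, v k ≠ w k := ⟨k₀, hk₀⟩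
  set k := Nat.find hex
  have hkn : k < n := (Nat.find_le hk₀).trans_lt hk₀n
  have hsep := sub_le_dist_codingPt h0 h1 (fun j hj => not_not.1 (Nat.find_min hex hj))
    (Nat.find_spec hex)
  have hmono : (1 - 2 * c) * sideLen Λ n ≤ (1 - 2 * c) * sideLen Λ k :=
    mul_le_mul_of_nonneg_left (sideLen_antitone h0 h1 hkn.le) (by linarith)
  linarith [sideLen_succ_le_mul h0 hc k]

def uniformWordMeasure : Measure (ℕ → Bool × Bool) :=
  Measure.infinitePi fun _ => (PMF.uniformOfFintype (Bool × Bool)).toMeasure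

instance : IsProbabilityMeasure uniformWordMeasure := by
  unfold uniformWordMeasure; infer_instance

theorem uniformWordMeasure_cylinder (v : ℕ → Bool × Bool) (n : ℕ) :
    uniformWordMeasure {w | ∀ k < n, w k = v k} = 4⁻¹ ^ n := by
  have hcyl : {w : ℕ → Bool × Bool | ∀ k < n, w k = v k} =
      Set.pi (Finset.range n : Set ℕ) fun k => {v k} := by
    ext w; simp
  rw [hcyl, uniformWordMeasure, Measure.infinitePi_pi
    (fun _ : ℕ => (PMF.uniformOfFintype (Bool × Bool)).toMeasure)
    (fun _ _ => measurableSet_singleton _)]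
  simp [PMF.uniformOfFintype_apply]

def cantorMeasure (Λ : ℕ → ℝ) : Measure ℂ := uniformWordMeasure.map (codingPt Λ)

theorem cantorMeasure_cantorK {Λ : ℕ → ℝ} (h0 : ∀ n, 0 ≤ Λ n) (h1 : ∀ n, Λ n ≤ 1) :
    cantorMeasure Λ (cantorK Λ) = 1 := by
  have hmeas := measurable_codingPt h0 h1
  have : IsProbabilityMeasure (cantorMeasure Λ) :=
    Measure.isProbabilityMeasure_map hmeas.aemeasurable
  refine le_antisymm prob_le_one ?_
  have hpre : codingPt Λ ⁻¹' cantorK Λ = Set.univ := eq_univ_of_forall (codingPt_mem_cantorK h0 h1)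
  calc 1 = uniformWordMeasure (codingPt Λ ⁻¹' cantorK Λ) := by rw [hpre, measure_univ]
    _ ≤ cantorMeasure Λ (cantorK Λ) := Measure.le_map_apply hmeas.aemeasurable _

theorem cantorMeasure_le_of_ediam_lt {Λ : ℕ → ℝ} (h0 : ∀ n, 0 ≤ Λ n) {c : ℝ}
    (hc : ∀ n, Λ n ≤ c) (hc2 : c ≤ 1 / 2) {E : Set ℂ} {n : ℕ}
    (hE : ediam E < ENNReal.ofReal ((1 - 2 * c) * sideLen Λ n)) :
    cantorMeasure Λ E ≤ 4⁻¹ ^ n := by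
  have h1 (n : ℕ) : Λ n ≤ 1 := (hc n).trans (by linarith)
  -- `closure E` is measurable and has the same diameter as `E`.
  calc cantorMeasure Λ E ≤ cantorMeasure Λ (closure E) := measure_mono subset_closure
    _ = uniformWordMeasure (codingPt Λ ⁻¹' closure E) :=
        Measure.map_apply (measurable_codingPt h0 h1) isClosed_closure.measurableSet
    _ ≤ 4⁻¹ ^ n := ?_
  rcases (codingPt Λ ⁻¹' closure E).eq_empty_or_nonempty with hempty | ⟨v, hv⟩
  · simp [hempty]
  rw [← uniformWordMeasure_cylinder v n]
  refine measure_mono fun w hw => eq_of_dist_codingPt_lt h0 hc hc2 (edist_lt_ofReal.1 ?_)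
  calc edist (codingPt Λ w) (codingPt Λ v) ≤ ediam (closure E) := edist_le_ediam_of_mem hw hv
    _ = ediam E := ediam_closure E
    _ < _ := hE

section DensityEstimates

variable {Λ : ℕ → ℝ} {c : ℝ} (h4 : ∀ n, 1 / 4 ≤ Λ n) (hc : ∀ n, Λ n ≤ c) (hc2 : c < 1 / 2)
include h4 hc hc2

theorem cantorMeasure_le_of_linDensity_le {E : Set ℂ} {m : ℕ} {η D : ℝ}
    (hE : ediam E = ENNReal.ofReal D) (hDm : (1 - 2 * c) * sideLen Λ (m + 1) ≤ D)
    (hD : D < (1 - 2 * c) * sideLen Λ m) (hη : linDensity Λ m ≤ η) :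
    cantorMeasure Λ E ≤ ENNReal.ofReal (4 * η / (1 - 2 * c) * D) := by
  have h0 (n : ℕ) : 0 ≤ Λ n := by linarith [h4 n]
  have hs : 0 < sideLen Λ m := sideLen_pos (fun n => by linarith [h4 n]) m
  have hgap : 0 < 1 - 2 * c := by linarith
  have hη0 : 0 ≤ η := hη.trans' (by rw [linDensity]; positivity)
  have hquarter : sideLen Λ m ≤ 4 * sideLen Λ (m + 1) := by
    rw [sideLen_succ]; nlinarith [h4 m]
  have hsm : sideLen Λ m ≤ 4 * D / (1 - 2 * c) := by
    rw [le_div_iff₀ hgap]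
    nlinarith [mul_le_mul_of_nonneg_left hquarter hgap.le]
  have hreal : ((4 : ℝ) ^ m)⁻¹ ≤ 4 * η / (1 - 2 * c) * D :=
    calc ((4 : ℝ) ^ m)⁻¹ = linDensity Λ m * sideLen Λ m := by rw [linDensity]; field_simp
      _ ≤ η * (4 * D / (1 - 2 * c)) := mul_le_mul hη hsm hs.le hη0
      _ = 4 * η / (1 - 2 * c) * D := by ring
  have hEm : ediam E < ENNReal.ofReal ((1 - 2 * c) * sideLen Λ m) := by
    rwa [hE, ENNReal.ofReal_lt_ofReal_iff (by positivity)]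
  calc cantorMeasure Λ E ≤ 4⁻¹ ^ m := cantorMeasure_le_of_ediam_lt h0 hc hc2.le hEm
    _ = ENNReal.ofReal ((4 : ℝ) ^ m)⁻¹ := by
        rw [ENNReal.ofReal_inv_of_pos (by positivity), ENNReal.ofReal_pow (by norm_num)]
        simp [ENNReal.inv_pow]
    _ ≤ ENNReal.ofReal (4 * η / (1 - 2 * c) * D) := ENNReal.ofReal_le_ofReal hreal

theorem cantorMeasure_le_mul_ediam (ha : Tendsto (linDensity Λ) atTop (𝓝 0)) {ε : ℝ}
    (hε : 0 < ε) : ∃ δ > 0, ∀ s, ediam s ≤ δ →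
      cantorMeasure Λ s ≤ ENNReal.ofReal ε * ediam s ^ (1 : ℝ) := by
  have h0 (n : ℕ) : 0 ≤ Λ n := by linarith [h4 n]
  have hs : ∀ n, 0 < sideLen Λ n := sideLen_pos fun n => by linarith [h4 n]
  have hgap : 0 < 1 - 2 * c := by linarith
  obtain ⟨N, hN⟩ := (ha.eventually (ge_mem_nhds
    (show 0 < ε * (1 - 2 * c) / 4 by positivity))).exists_forall_of_atTop
  have hδ : 0 < (1 - 2 * c) * sideLen Λ N / 2 := by have := hs N; positivity
  refine ⟨ENNReal.ofReal ((1 - 2 * c) * sideLen Λ N / 2), ENNReal.ofReal_pos.2 hδ,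
    fun s hsδ => ?_⟩
  obtain ⟨D, hD0, hsD⟩ : ∃ D, 0 ≤ D ∧ ediam s = ENNReal.ofReal D :=
    ⟨_, ENNReal.toReal_nonneg,
      (ENNReal.ofReal_toReal (ne_top_of_le_ne_top ENNReal.ofReal_ne_top hsδ)).symm⟩
  rw [ENNReal.rpow_one, hsD, ← ENNReal.ofReal_mul hε.le]
  rcases hD0.eq_or_lt with rfl | hDpos
  · have hpow (n : ℕ) : cantorMeasure Λ s ≤ 4⁻¹ ^ n := by
      refine cantorMeasure_le_of_ediam_lt h0 hc hc2.le ?_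
      rw [hsD, ENNReal.ofReal_zero, ENNReal.ofReal_pos]
      exact mul_pos hgap (hs n)
    simpa using ge_of_tendsto' (ENNReal.tendsto_pow_atTop_nhds_zero_of_lt_one (by norm_num)) hpow
  · have hDN : D < (1 - 2 * c) * sideLen Λ N := by
      rw [hsD, ENNReal.ofReal_le_ofReal_iff hδ.le] at hsδ
      linarith
    have hlim : Tendsto (fun n => (1 - 2 * c) * sideLen Λ n) atTop (𝓝 0) := by
      simpa using (tendsto_sideLen_atTop h0 hc (by linarith)).const_mul (1 - 2 * c)
    obtain ⟨m, hNm, hm1, hm⟩ := exists_succ_le_lt_of_tendsto_zero hlim hDpos hDN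
    convert cantorMeasure_le_of_linDensity_le h4 hc hc2 hsD hm1 hm (hN m hNm) using 2
    field_simp

end DensityEstimates

/-- If `aₙ → 0`, then the Cantor set `K` has Hausdorff dimension at least `1` and its
one-dimensional Hausdorff measure is not `σ`-finite. -/
theorem dimH_ge_one_and_not_sigmaFinite (Λ : ℕ → ℝ) (lam : ℝ) (hlam : lam < 1 / 2)
    (hΛ : ∀ n, 1 / 4 ≤ Λ n ∧ Λ n ≤ lam)
    (ha : Tendsto (linDensity Λ) atTop (𝓝 0)) :
    1 ≤ dimH (cantorK Λ) ∧
      ¬ SigmaFinite ((MeasureTheory.Measure.hausdorffMeasure 1 : Measure ℂ).restrict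
        (cantorK Λ)) := by
  have h4 (n : ℕ) : 1 / 4 ≤ Λ n := (hΛ n).1
  have hc (n : ℕ) : Λ n ≤ lam := (hΛ n).2
  have hinf (A : Set ℂ) (hA : cantorMeasure Λ A ≠ 0) : μH[1] A = ∞ :=
    hausdorffMeasure_eq_top_of_forall_le_mul_ediam
      (fun _ hε => cantorMeasure_le_mul_ediam h4 hc hlam ha hε) hA
  have hK : cantorMeasure Λ (cantorK Λ) ≠ 0 := by
    rw [cantorMeasure_cantorK (fun n => by linarith [h4 n]) fun n => by linarith [hc n]]
    exact one_ne_zero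
  refine ⟨?_, not_sigmaFinite_restrict_of_measure_eq_top hinf hK⟩
  simpa using le_dimH_of_hausdorffMeasure_eq_top (d := 1) (by simpa using hinf _ hK)
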